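/- arXiv:2502.07933 — 3 statements merged into one kernel-verified Lean document; each statement's English description precedes it below -/
import Mathlib

section
/- If the skeleton of a digraph D is 3-partite (i.e., properly vertex 3-colorable), then lir(D) ≤ 2. -/
/- A digraph on vertex set `V` is given by its finite arc set `E ⊆ V × V`
(arcs in both directions between two vertices are allowed, loops are excluded
via explicit hypotheses). -/

/-- The outdegree of a vertex. -/
def outdeg {V : Type*} [DecidableEq V] (E : Finset (V × V)) (v : V) : ℕ :=
  (E.filter fun a => a.1 = v).card

/-- The indegree of a vertex. -/
def indeg {V : Type*} [DecidableEq V] (E : Finset (V × V)) (v : V) : ℕ :=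
  (E.filter fun a => a.2 = v).card

/-- The balanced degree of a vertex. -/
def bdeg {V : Type*} [DecidableEq V] (E : Finset (V × V)) (v : V) : ℤ :=
  (outdeg E v : ℤ) - (indeg E v : ℤ)

/-- A digraph is weak locally irregular if the endpoints of every arc have
different outdegree-indegree pairs. -/
def WeakLI {V : Type*} [DecidableEq V] (E : Finset (V × V)) : Prop :=
  ∀ a ∈ E, (outdeg E a.1, indeg E a.1) ≠ (outdeg E a.2, indeg E a.2)

/-- A digraph is strong locally irregular if the endpoints of every arc have
different balanced degrees. -/
def StrongLI {V : Type*} [DecidableEq V] (E : Finset (V × V)) : Prop :=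
  ∀ a ∈ E, bdeg E a.1 ≠ bdeg E a.2

/-- `lirLe E n` : the arcs of `E` admit a coloring with at most `n` colors in
which every color class induces a weak locally irregular digraph. -/
def lirLe {V : Type*} [DecidableEq V] (E : Finset (V × V)) (n : ℕ) : Prop :=
  ∃ c : V × V → Fin n, ∀ i : Fin n, WeakLI (E.filter fun a => c a = i)

/-- `slirLe E n` : the arcs of `E` admit a coloring with at most `n` colors in
which every color class induces a strong locally irregular digraph. -/
def slirLe {V : Type*} [DecidableEq V] (E : Finset (V × V)) (n : ℕ) : Prop :=
  ∃ c : V × V → Fin n, ∀ i : Fin n, StrongLI (E.filter fun a => c a = i)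

/-- The skeleton of a digraph: the simple graph obtained by replacing each arc
or pair of opposite arcs with a single edge. -/
def skeleton {V : Type*} [DecidableEq V] (E : Finset (V × V)) : SimpleGraph V where
  Adj u v := u ≠ v ∧ ((u, v) ∈ E ∨ (v, u) ∈ E)
  symm := by
    constructor
    intro u v h
    exact ⟨h.1.symm, h.2.elim Or.inr Or.inl⟩
  loopless := by
    constructor
    intro v h
    exact h.1 rfl

/-- `E'` is an orientation of the simple graph `G`: its arcs lie on edges of `G`
and every edge of `G` receives exactly one direction. -/
def IsOrientationOf {V : Type*} [DecidableEq V] (E' : Finset (V × V))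
    (G : SimpleGraph V) : Prop :=
  (∀ a ∈ E', G.Adj a.1 a.2) ∧ (∀ u v : V, G.Adj u v → ((u, v) ∈ E' ↔ (v, u) ∉ E'))

/-- An outdegree-decreasing acyclic digraph: vertices can be linearly ordered so
that every arc goes forward and outdegrees are nonincreasing along the order. -/
def OutdegDecAcyclic {V : Type*} [DecidableEq V] (E : Finset (V × V)) : Prop :=
  ∃ r : V → ℕ, Function.Injective r ∧ (∀ a ∈ E, r a.1 ≤ r a.2) ∧
    ∀ u v : V, r u < r v → outdeg E v ≤ outdeg E u

/-- An indegree-increasing acyclic digraph: vertices can be linearly ordered so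
that every arc goes backward and indegrees are nondecreasing along the order. -/
def IndegIncAcyclic {V : Type*} [DecidableEq V] (E : Finset (V × V)) : Prop :=
  ∃ r : V → ℕ, Function.Injective r ∧ (∀ a ∈ E, r a.2 ≤ r a.1) ∧
    ∀ u v : V, r u ≤ r v → indeg E u ≤ indeg E v

/-! A proper 3-colouring `χ` of the skeleton splits the arcs into those along which `χ` increases
and those along which it decreases. Each class climbs a grading with only three levels (`χ`, resp.
`2 - χ`), and such a digraph is weak locally irregular: an arc leaving level `0` starts at a source
and ends at a non-source, and any other arc ends at a sink and starts at a non-sink. -/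

section Digraph

variable {V : Type*} [DecidableEq V] {F : Finset (V × V)}

lemma outdeg_pos_of_mem {a : V × V} (ha : a ∈ F) : 0 < outdeg F a.1 :=
  Finset.card_pos.2 ⟨a, Finset.mem_filter.2 ⟨ha, rfl⟩⟩

lemma indeg_pos_of_mem {a : V × V} (ha : a ∈ F) : 0 < indeg F a.2 :=
  Finset.card_pos.2 ⟨a, Finset.mem_filter.2 ⟨ha, rfl⟩⟩

lemma outdeg_eq_zero_iff {v : V} : outdeg F v = 0 ↔ ∀ a ∈ F, a.1 ≠ v := by
  simp only [outdeg, Finset.card_eq_zero, Finset.filter_eq_empty_iff]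

lemma indeg_eq_zero_iff {v : V} : indeg F v = 0 ↔ ∀ a ∈ F, a.2 ≠ v := by
  simp only [indeg, Finset.card_eq_zero, Finset.filter_eq_empty_iff]

theorem weakLI_of_lt_along_arcs (f : V → Fin 3) (hf : ∀ a ∈ F, f a.1 < f a.2) : WeakLI F := by
  intro a ha hdeg
  obtain ⟨hout, hin⟩ := Prod.ext_iff.1 hdeg
  by_cases h0 : f a.1 = 0
  · have hsource : indeg F a.1 = 0 := indeg_eq_zero_iff.2 fun b hb hb2 => by
      have := hf b hb
      rw [hb2, h0] at this
      exact Fin.not_lt_zero _ this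
    have := indeg_pos_of_mem ha
    omega
  · have htop : f a.2 = 2 := by have := hf a ha; omega
    have hsink : outdeg F a.2 = 0 := outdeg_eq_zero_iff.2 fun b hb hb1 => by
      have := hf b hb
      rw [hb1, htop] at this
      omega
    have := outdeg_pos_of_mem ha
    omega

end Digraph

theorem stmt1 {V : Type*} [DecidableEq V] (E : Finset (V × V))
    (hloop : ∀ v : V, (v, v) ∉ E)
    (htri : (skeleton E).Colorable 3) :
    lirLe E 2 := by
  obtain ⟨χ⟩ := htri
  have hχ : ∀ a ∈ E, χ a.1 ≠ χ a.2 := by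
    rintro ⟨u, v⟩ ha
    exact χ.valid ⟨fun h : u = v => hloop u (by subst h; exact ha), Or.inl ha⟩
  refine ⟨fun a => if χ a.1 < χ a.2 then 0 else 1, fun i => ?_⟩
  fin_cases i
  · refine weakLI_of_lt_along_arcs χ fun a ha => ?_
    simpa using (Finset.mem_filter.1 ha).2
  · refine weakLI_of_lt_along_arcs (Fin.rev ∘ χ) fun a ha => ?_
    obtain ⟨haE, hdown⟩ := Finset.mem_filter.1 ha
    have hle : χ a.2 ≤ χ a.1 := by simpa using hdown
    simpa using lt_of_le_of_ne hle (hχ a haE).symm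
end

section
/- Every symmetric digraph D satisfies slir(D) ≤ 2, i.e., its arc set can be 2-colored so that each color class induces a strong locally irregular digraph. -/
/-
Among the orientations `O` of `E` (one arc from each pair of opposite arcs) take one
maximising `Φ O = ∑ v, σ_O(v) ^ 2`. Reversing an arc `uv` lowers `σ(u)` by 2 and raises `σ(v)`
by 2, so `Φ` changes by `4 (σ(v) - σ(u)) + 8`; hence in a maximiser no arc has `σ(u) = σ(v)`.
Colour `O` with one colour and the reversed arcs with the other: reversal negates `σ`, so both
classes are strong locally irregular.
-/
section

variable {V : Type*}

def reverse (S : Finset (V × V)) : Finset (V × V) :=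
  S.map (Equiv.prodComm V V).toEmbedding

@[simp]
lemma mem_reverse {S : Finset (V × V)} {a : V × V} : a ∈ reverse S ↔ a.swap ∈ S := by
  simp [reverse, Equiv.prodComm]

def IsOrientation (E O : Finset (V × V)) : Prop :=
  O ⊆ E ∧ ∀ a ∈ E, a ∈ O ↔ a.swap ∉ O

lemma IsOrientation.fst_ne_snd {E O : Finset (V × V)} (hO : IsOrientation E O) {a : V × V}
    (ha : a ∈ E) : a.1 ≠ a.2 := by
  intro h
  have := hO.2 a ha
  rw [show a.swap = a from Prod.ext h.symm h] at this
  tauto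

lemma exists_isOrientation {E : Finset (V × V)} (hloop : ∀ v : V, (v, v) ∉ E)
    (hsym : ∀ u v : V, (u, v) ∈ E → (v, u) ∈ E) : ∃ O, IsOrientation E O := by
  classical
  refine ⟨E.filter fun a => WellOrderingRel a.1 a.2, Finset.filter_subset _ _, ?_⟩
  rintro ⟨u, v⟩ huv
  have hne : u ≠ v := by rintro rfl; exact hloop u huv
  have hvu := hsym u v huv
  rcases trichotomous_of WellOrderingRel u v with h | h | h
  · simp [*, asymm h]
  · exact absurd h hne
  · simp [*, asymm h]

variable [DecidableEq V]

lemma outdeg_insert {S : Finset (V × V)} {a : V × V} (ha : a ∉ S) (v : V) :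
    outdeg (insert a S) v = outdeg S v + if a.1 = v then 1 else 0 := by
  unfold outdeg
  rw [Finset.filter_insert]
  split_ifs with h
  · exact Finset.card_insert_of_notMem (by simp [ha])
  · rfl

lemma indeg_insert {S : Finset (V × V)} {a : V × V} (ha : a ∉ S) (v : V) :
    indeg (insert a S) v = indeg S v + if a.2 = v then 1 else 0 := by
  unfold indeg
  rw [Finset.filter_insert]
  split_ifs with h
  · exact Finset.card_insert_of_notMem (by simp [ha])
  · rfl

lemma bdeg_insert {S : Finset (V × V)} {a : V × V} (ha : a ∉ S) (v : V) :
    bdeg (insert a S) v =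
      bdeg S v + ((if a.1 = v then 1 else 0) - if a.2 = v then 1 else 0) := by
  unfold bdeg
  rw [outdeg_insert ha, indeg_insert ha]
  split_ifs <;> push_cast <;> ring

lemma outdeg_reverse (S : Finset (V × V)) (v : V) : outdeg (reverse S) v = indeg S v := by
  unfold outdeg indeg reverse
  rw [Finset.filter_map, Finset.card_map]
  rfl

lemma indeg_reverse (S : Finset (V × V)) (v : V) : indeg (reverse S) v = outdeg S v := by
  unfold outdeg indeg reverse
  rw [Finset.filter_map, Finset.card_map]
  rfl

lemma bdeg_reverse (S : Finset (V × V)) (v : V) : bdeg (reverse S) v = -bdeg S v := by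
  unfold bdeg
  rw [outdeg_reverse, indeg_reverse]
  ring

lemma StrongLI.reverse {S : Finset (V × V)} (h : StrongLI S) : StrongLI (reverse S) := by
  intro a ha
  rw [bdeg_reverse, bdeg_reverse, ne_eq, neg_inj]
  exact (h a.swap (mem_reverse.1 ha)).symm

def flipArc (O : Finset (V × V)) (a : V × V) : Finset (V × V) :=
  insert a.swap (O.erase a)

lemma IsOrientation.flipArc {E O : Finset (V × V)} (hO : IsOrientation E O) {a : V × V}
    (ha : a ∈ O) (hswap : a.swap ∈ E) : IsOrientation E (flipArc O a) := by
  have hne := hO.fst_ne_snd (hO.1 ha)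
  refine ⟨Finset.insert_subset hswap ((Finset.erase_subset _ _).trans hO.1), fun b hb => ?_⟩
  have hb' := hO.2 b hb
  have ha' := hO.2 a (hO.1 ha)
  simp only [_root_.flipArc, Finset.mem_insert, Finset.mem_erase]
  grind [Prod.swap_swap, Prod.swap_inj]

lemma bdeg_flipArc {O : Finset (V × V)} {a : V × V} (ha : a ∈ O) (hswap : a.swap ∉ O)
    (v : V) :
    bdeg (flipArc O a) v =
      bdeg O v + 2 * ((if a.2 = v then 1 else 0) - if a.1 = v then 1 else 0) := by
  have herase := bdeg_insert (Finset.notMem_erase a O) v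
  rw [Finset.insert_erase ha] at herase
  rw [flipArc, bdeg_insert (fun h => hswap (Finset.mem_of_mem_erase h))]
  simp only [Prod.fst_swap, Prod.snd_swap]
  linarith

lemma sum_sq_add_two_mul_sub_indicator {s : Finset V} {f : V → ℤ} {u v : V} (hu : u ∈ s)
    (hv : v ∈ s) (huv : u ≠ v) :
    ∑ w ∈ s, (f w + 2 * ((if v = w then 1 else 0) - if u = w then 1 else 0)) ^ 2 =
      ∑ w ∈ s, f w ^ 2 + 4 * (f v - f u) + 8 := by
  have hv' : v ∈ s.erase u := Finset.mem_erase.2 ⟨huv.symm, hv⟩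
  rw [← Finset.add_sum_erase s _ hu, ← Finset.add_sum_erase _ _ hv',
    ← Finset.add_sum_erase s _ hu, ← Finset.add_sum_erase _ _ hv']
  have hrest : ∀ w ∈ (s.erase u).erase v,
      (f w + 2 * ((if v = w then 1 else 0) - if u = w then 1 else 0)) ^ 2 = f w ^ 2 := by
    intro w hw
    obtain ⟨hwv, hwu, -⟩ := by simpa using hw
    simp [Ne.symm hwv, Ne.symm hwu]
  rw [Finset.sum_congr rfl hrest]
  simp only [if_neg huv, if_neg huv.symm, if_true]
  ring

lemma IsOrientation.sum_sq_bdeg_flipArc {E O : Finset (V × V)} (hO : IsOrientation E O)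
    {a : V × V} (ha : a ∈ O) {s : Finset V} (hfst : a.1 ∈ s) (hsnd : a.2 ∈ s) :
    ∑ v ∈ s, bdeg (_root_.flipArc O a) v ^ 2 =
      ∑ v ∈ s, bdeg O v ^ 2 + 4 * (bdeg O a.2 - bdeg O a.1) + 8 := by
  have haE := hO.1 ha
  simp only [bdeg_flipArc ha ((hO.2 a haE).1 ha)]
  exact sum_sq_add_two_mul_sub_indicator hfst hsnd (hO.fst_ne_snd haE)

theorem exists_isOrientation_strongLI {E : Finset (V × V)} (hloop : ∀ v : V, (v, v) ∉ E)
    (hsym : ∀ u v : V, (u, v) ∈ E → (v, u) ∈ E) :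
    ∃ O, IsOrientation E O ∧ StrongLI O := by
  classical
  set orientations := E.powerset.filter (IsOrientation E)
  have hmem : ∀ O, IsOrientation E O → O ∈ orientations := fun O hO =>
    Finset.mem_filter.2 ⟨Finset.mem_powerset.2 hO.1, hO⟩
  obtain ⟨O, hO, hmax⟩ := Finset.exists_max_image orientations
    (fun O => ∑ v ∈ E.image Prod.fst, bdeg O v ^ 2)
    (let ⟨O, hO⟩ := exists_isOrientation hloop hsym; ⟨O, hmem O hO⟩)
  replace hO : IsOrientation E O := (Finset.mem_filter.1 hO).2
  refine ⟨O, hO, fun a ha heq => ?_⟩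
  have haE := hO.1 ha
  have hswap : a.swap ∈ E := hsym a.1 a.2 haE
  have hgain := hO.sum_sq_bdeg_flipArc ha (Finset.mem_image_of_mem _ haE)
    (Finset.mem_image_of_mem Prod.fst hswap)
  have hle := hmax _ (hmem _ (hO.flipArc ha hswap))
  rw [hgain, heq] at hle
  omega

lemma IsOrientation.filter_mem {E O : Finset (V × V)} (hO : IsOrientation E O) :
    E.filter (· ∈ O) = O :=
  Finset.filter_mem_eq_inter.trans (Finset.inter_eq_right.2 hO.1)

lemma IsOrientation.filter_notMem {E O : Finset (V × V)} (hO : IsOrientation E O)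
    (hsym : ∀ u v : V, (u, v) ∈ E → (v, u) ∈ E) : E.filter (· ∉ O) = reverse O := by
  ext a
  simp only [Finset.mem_filter, mem_reverse]
  constructor
  · rintro ⟨ha, haO⟩
    exact not_not.1 (mt (hO.2 a ha).2 haO)
  · intro ha
    have haE : a ∈ E := hsym _ _ (hO.1 ha)
    exact ⟨haE, fun h => (hO.2 a haE).1 h ha⟩

lemma slirLe_two_of_isOrientation {E O : Finset (V × V)} (hO : IsOrientation E O)
    (hsym : ∀ u v : V, (u, v) ∈ E → (v, u) ∈ E) (hLI : StrongLI O) : slirLe E 2 := by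
  refine ⟨fun a => if a ∈ O then 0 else 1, fun i => ?_⟩
  fin_cases i
  · simpa [hO.filter_mem] using hLI
  · simpa [hO.filter_notMem hsym] using hLI.reverse

end

theorem stmt14 {V : Type*} [DecidableEq V] (E : Finset (V × V))
    (hloop : ∀ v : V, (v, v) ∉ E)
    (hsym : ∀ u v : V, (u, v) ∈ E → (v, u) ∈ E) :
    slirLe E 2 := by
  obtain ⟨O, hO, hLI⟩ := exists_isOrientation_strongLI hloop hsym
  exact slirLe_two_of_isOrientation hO hsym hLI
end

section
/- If the skeleton of a digraph D is tripartite, then slir(D) ≤ 3. -/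
/-!
Colour every arc by the colour of its tail in a proper colouring of the skeleton. Within one
colour class every arc leaves the vertices of colour `i` and enters vertices of other colours,
so each tail is a source (`σ > 0`) and each head is a sink (`σ < 0`) of that class.
-/

section

variable {V : Type*} [DecidableEq V]

lemma bdeg_tail_pos {F : Finset (V × V)} {a : V × V} (ha : a ∈ F)
    (hsource : ∀ b ∈ F, b.2 ≠ a.1) : 0 < bdeg F a.1 := by
  have hout : 0 < outdeg F a.1 := Finset.card_pos.mpr ⟨a, Finset.mem_filter.mpr ⟨ha, rfl⟩⟩
  have hin : indeg F a.1 = 0 := Finset.card_eq_zero.mpr (Finset.filter_eq_empty_iff.mpr hsource)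
  unfold bdeg
  omega

lemma bdeg_head_neg {F : Finset (V × V)} {a : V × V} (ha : a ∈ F)
    (hsink : ∀ b ∈ F, b.1 ≠ a.2) : bdeg F a.2 < 0 := by
  have hin : 0 < indeg F a.2 := Finset.card_pos.mpr ⟨a, Finset.mem_filter.mpr ⟨ha, rfl⟩⟩
  have hout : outdeg F a.2 = 0 := Finset.card_eq_zero.mpr (Finset.filter_eq_empty_iff.mpr hsink)
  unfold bdeg
  omega

lemma strongLI_of_arcs_leave_set {F : Finset (V × V)} (S : Set V)
    (hS : ∀ a ∈ F, a.1 ∈ S ∧ a.2 ∉ S) : StrongLI F := by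
  intro a ha
  have htail := bdeg_tail_pos ha fun b hb h => (hS b hb).2 (h ▸ (hS a ha).1)
  have hhead := bdeg_head_neg ha fun b hb h => (hS a ha).2 (h ▸ (hS b hb).1)
  omega

lemma slirLe_of_arc_coloring {E : Finset (V × V)} {n : ℕ} (c : V → Fin n)
    (hc : ∀ a ∈ E, c a.1 ≠ c a.2) : slirLe E n := by
  refine ⟨fun a => c a.1, fun i => strongLI_of_arcs_leave_set {v | c v = i} ?_⟩
  intro a ha
  obtain ⟨haE, hi⟩ := Finset.mem_filter.mp ha
  exact ⟨hi, fun h => hc a haE (hi.trans h.symm)⟩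

lemma skeleton_adj_of_mem {E : Finset (V × V)} (hloop : ∀ v : V, (v, v) ∉ E) {u v : V}
    (huv : (u, v) ∈ E) : (skeleton E).Adj u v :=
  ⟨fun h => hloop u (h ▸ huv), Or.inl huv⟩

lemma slirLe_of_colorable {E : Finset (V × V)} {n : ℕ} (hloop : ∀ v : V, (v, v) ∉ E)
    (hcol : (skeleton E).Colorable n) : slirLe E n := by
  obtain ⟨col⟩ := hcol
  exact slirLe_of_arc_coloring col fun _ ha => col.valid (skeleton_adj_of_mem hloop ha)

end

theorem stmt16 {V : Type*} [DecidableEq V] (E : Finset (V × V))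
    (hloop : ∀ v : V, (v, v) ∉ E)
    (htri : (skeleton E).Colorable 3) :
    slirLe E 3 :=
  slirLe_of_colorable hloop htri
end
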